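/- arXiv:1702.05854 — 5 statements merged into one kernel-verified Lean document; each statement's English description precedes it below -/
import Mathlib

section
/- For every stochastic graph 𝒢 = (V, E, w), every probabilistic suspect set 𝒱_I = (V_I, p), and every edge set T ⊆ E, the influence suspension of T equals the total walk probability of the hitting self-avoiding walks interdicted by T; precisely: (i) the sum of Pr[h is an HSAW of (g, X)] over all finite sequences h of pairwise distinct nodes ending at a node of V_I equals I_𝒢(𝒱_I), and (ii) the sum of Pr[h is an HSAW of (g, X)] over all such sequences whose edge set intersects T equals D(T, 𝒱_I). Consequently, if I_𝒢(𝒱_I) > 0 then D(T, 𝒱_I) = I_𝒢(𝒱_I) · Pr[T intersects the edge set of a random HSAW], where a random HSAW is drawn with probability proportional to its walk probability. -/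
/-!
Fix a walk `h = ⟨v₁,…,v_l⟩` of distinct nodes. The event "`h` is an HSAW of `(g, X)`" is the
intersection of an event on `g` (every `vᵢ` with `i < l` picks `vᵢ₊₁`) and an event on `X`
(`X` meets `h` exactly in `v_l`). By independence over the nodes the first has probability
`∏ w(vᵢ₊₁, vᵢ)`, the product of the weights of the edges of `h`.

For fixed `(g, X)`, sending an HSAW to its first node is a bijection onto the nodes reachable
from `X`: starting from such a node, follow `g` until `X` is hit. Summing the walk probabilities
therefore gives the expected number of reachable nodes, `I_𝒢(𝒱_I)`. Deleting the edges of `T`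
multiplies by zero the weight of every walk using an edge of `T` and changes no other weight,
so the walks interdicted by `T` carry exactly `I_𝒢(𝒱_I) − I_{𝒢'}(𝒱_I)`.
-/

noncomputable section
open scoped Classical

/-- Probability of a live-edge sample `g : V → Option V` under weights `w`:
independently for each node `v`, `g v = some u` with probability `w u v` and
`g v = none` with probability `1 − ∑_u w u v`. -/
def sampleProb {V : Type} [Fintype V] (w : V → V → ℝ) (g : V → Option V) : ℝ :=
  ∏ v : V, (g v).elim (1 - ∑ u : V, w u v) (fun u => w u v)

/-- `v` is reachable from the seed set `S` in the sample graph of `g`,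
which has an edge `(u, v)` exactly when `g v = some u`. -/
def Reachable {V : Type} (g : V → Option V) (S : Finset V) (v : V) : Prop :=
  ∃ s ∈ S, Relation.ReflTransGen (fun x y => g y = some x) s v

/-- Influence spread of a seed set `S`: the expected number of nodes reachable
from `S` in the live-edge sample graph. -/
def influence {V : Type} [Fintype V] [DecidableEq V] (w : V → V → ℝ) (S : Finset V) : ℝ :=
  ∑ g : V → Option V, sampleProb w g * (Nat.card {v : V // Reachable g S v} : ℝ)

/-- Probability that the random seed set equals `X`, when each `v ∈ VI` is
included independently with probability `p v`. -/
def seedProb {V : Type} [DecidableEq V] (VI : Finset V) (p : V → ℝ) (X : Finset V) : ℝ :=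
  (∏ u ∈ X, p u) * ∏ v ∈ VI \ X, (1 - p v)

/-- Expected influence spread of the probabilistic suspect set `(VI, p)`. -/
def influenceVI {V : Type} [Fintype V] [DecidableEq V]
    (w : V → V → ℝ) (VI : Finset V) (p : V → ℝ) : ℝ :=
  ∑ X ∈ VI.powerset, seedProb VI p X * influence w X

/-- `h = ⟨v₁,…,v_l⟩` is a hitting self-avoiding walk of `(g, X)`: a nonempty
list of pairwise distinct nodes with `g vᵢ = some vᵢ₊₁` for `1 ≤ i < l`
and `{v₁,…,v_l} ∩ X = {v_l}`. -/
def IsHSAW {V : Type} [DecidableEq V] (g : V → Option V) (X : Finset V) (h : List V) : Prop :=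
  h ≠ [] ∧ h.Nodup ∧ h.Chain' (fun a b => g a = some b) ∧
    ∀ v ∈ h, (v ∈ X ↔ h.getLast? = some v)

/-- Probability, over the random pair `(g, X)`, that the fixed walk `h`
is a hitting self-avoiding walk of `(g, X)`. -/
def walkProb {V : Type} [Fintype V] [DecidableEq V]
    (w : V → V → ℝ) (VI : Finset V) (p : V → ℝ) (h : List V) : ℝ :=
  ∑ g : V → Option V, ∑ X ∈ VI.powerset,
    (if IsHSAW g X h then sampleProb w g * seedProb VI p X else 0)

/-- The edge set of a walk `⟨v₁,…,v_l⟩`: the edges `(vᵢ₊₁, vᵢ)` for `1 ≤ i < l`. -/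
def walkEdges {V : Type} (h : List V) : List (V × V) :=
  (h.zip h.tail).map Prod.swap

theorem List.isChain_iff_forall_mem_zip_tail {α : Type*} {R : α → α → Prop} {l : List α} :
    l.IsChain R ↔ ∀ e ∈ l.zip l.tail, R e.1 e.2 := by
  induction l using List.twoStepInduction <;> simp_all

theorem List.map_fst_zip_tail {α : Type*} (l : List α) :
    (l.zip l.tail).map Prod.fst = l.dropLast := by
  induction l using List.twoStepInduction <;> simp_all

theorem tsum_subtype_eq_sum_of_mem_iff {α M : Type*} [AddCommMonoid M] [TopologicalSpace M]
    {P : α → Prop} (s : Finset α) (hs : ∀ x, x ∈ s ↔ P x) (f : α → M) :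
    ∑' x : {x // P x}, f x = ∑ x ∈ s, f x :=
  ((Equiv.subtypeEquivRight hs).tsum_eq (f ∘ Subtype.val)).symm.trans (Finset.tsum_subtype s f)

def walkWeight {V : Type} (w : V → V → ℝ) (l : List V) : ℝ :=
  ((walkEdges l).map fun e => w e.1 e.2).prod

def lastHitProb {V : Type} [DecidableEq V] (VI : Finset V) (p : V → ℝ) (l : List V) : ℝ :=
  ∑ X ∈ VI.powerset,
    if l ≠ [] ∧ ∀ v ∈ l, (v ∈ X ↔ l.getLast? = some v) then seedProb VI p X else 0

section SampleProb

variable {V : Type} [Fintype V] [DecidableEq V]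

theorem sum_sampleProb_ite_forall_eq (w : V → V → ℝ) (A : Finset V) (nxt : V → V) :
    (∑ g : V → Option V, if ∀ v ∈ A, g v = some (nxt v) then sampleProb w g else 0)
      = ∏ v ∈ A, w (nxt v) v := by
  -- The event constrains each node separately, so the summand is still a product over nodes
  -- and the sum over `g` factorises.
  set f : V → Option V → ℝ := fun v o =>
    if v ∈ A → o = some (nxt v) then o.elim (1 - ∑ u, w u v) (fun u => w u v) else 0
  have hsummand : ∀ g : V → Option V,
      (if ∀ v ∈ A, g v = some (nxt v) then sampleProb w g else 0) = ∏ v, f v (g v) := by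
    intro g
    simp only [f, Fintype.prod_ite_zero, sampleProb]
  have hfactor : ∀ v, ∑ o, f v o = if v ∈ A then w (nxt v) v else 1 := by
    intro v
    by_cases hv : v ∈ A <;> simp [f, hv, Fintype.sum_option]
  rw [Finset.sum_congr rfl fun g _ => hsummand g, ← Fintype.prod_sum,
    Finset.prod_congr rfl fun v _ => hfactor v, Fintype.prod_ite_mem]

theorem sum_sampleProb_ite_isChain (w : V → V → ℝ) {l : List V} (hl : l.Nodup) :
    (∑ g : V → Option V, if l.IsChain (fun a b => g a = some b) then sampleProb w g else 0)
      = walkWeight w l := by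
  set z := l.zip l.tail
  have hfst : (z.map Prod.fst).Nodup := by
    rw [List.map_fst_zip_tail]
    exact (List.dropLast_sublist l).nodup hl
  -- `l` is nodup, so each node has at most one successor along it.
  have hsucc : ∀ v, ∃ b, ∀ e ∈ z, e.1 = v → e.2 = b := by
    intro v
    by_cases hv : ∃ e ∈ z, e.1 = v
    · obtain ⟨e, he, rfl⟩ := hv
      exact ⟨e.2, fun e' he' hee' => by rw [List.inj_on_of_nodup_map hfst he' he hee']⟩
    · push Not at hv
      exact ⟨v, fun e he hev => absurd hev (hv e he)⟩
  choose nxt hnxt using hsucc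
  have hchain : ∀ g : V → Option V, l.IsChain (fun a b => g a = some b) ↔
      ∀ v ∈ (z.map Prod.fst).toFinset, g v = some (nxt v) := by
    intro g
    simp only [List.isChain_iff_forall_mem_zip_tail, List.mem_toFinset, List.mem_map,
      forall_exists_index, and_imp, forall_apply_eq_imp_iff₂]
    exact forall₂_congr fun e he => by rw [hnxt e.1 e he rfl]
  calc (∑ g : V → Option V, if l.IsChain (fun a b => g a = some b) then sampleProb w g else 0)
      = ∏ v ∈ (z.map Prod.fst).toFinset, w (nxt v) v := by
        simp only [hchain, sum_sampleProb_ite_forall_eq]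
    _ = walkWeight w l := by
        rw [List.prod_toFinset _ hfst, walkWeight, walkEdges, List.map_map, List.map_map]
        exact congrArg List.prod (List.map_congr_left fun e he => by simp [hnxt e.1 e he rfl])

theorem walkProb_eq_walkWeight_mul (w : V → V → ℝ) (VI : Finset V) (p : V → ℝ)
    {l : List V} (hl : l.Nodup) : walkProb w VI p l = walkWeight w l * lastHitProb VI p l := by
  rw [← sum_sampleProb_ite_isChain w hl, lastHitProb, Finset.sum_mul_sum, walkProb]
  refine Finset.sum_congr rfl fun g _ => Finset.sum_congr rfl fun X _ => ?_
  rw [ite_zero_mul_ite_zero]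
  congr 1
  simp only [IsHSAW, hl, true_and, eq_iff_iff]
  tauto

end SampleProb

section DeleteEdges

variable {V : Type} [DecidableEq V] (T : Finset (V × V)) (w : V → V → ℝ)

theorem walkWeight_deleteEdges_of_mem {l : List V} {e : V × V} (he : e ∈ walkEdges l)
    (heT : e ∈ T) : walkWeight (fun u v => if (u, v) ∈ T then 0 else w u v) l = 0 :=
  List.prod_eq_zero (List.mem_map.2 ⟨e, he, if_pos heT⟩)

theorem walkWeight_deleteEdges_of_forall_notMem {l : List V} (hl : ∀ e ∈ walkEdges l, e ∉ T) :
    walkWeight (fun u v => if (u, v) ∈ T then 0 else w u v) l = walkWeight w l :=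
  congrArg List.prod (List.map_congr_left fun e he => if_neg (hl e he))

variable [Fintype V]

theorem walkProb_sub_walkProb_deleteEdges (VI : Finset V) (p : V → ℝ) {l : List V}
    (hl : l.Nodup) :
    walkProb w VI p l - walkProb (fun u v => if (u, v) ∈ T then 0 else w u v) VI p l
      = if ∃ e ∈ T, e ∈ walkEdges l then walkProb w VI p l else 0 := by
  rw [walkProb_eq_walkWeight_mul _ _ _ hl, walkProb_eq_walkWeight_mul _ _ _ hl]
  split_ifs with hT
  · obtain ⟨e, heT, he⟩ := hT
    rw [walkWeight_deleteEdges_of_mem T w he heT, zero_mul, sub_zero]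
  · push Not at hT
    rw [walkWeight_deleteEdges_of_forall_notMem T w fun e he heT => hT e heT he, sub_self]

end DeleteEdges

namespace IsHSAW

variable {V : Type} [DecidableEq V] {g : V → Option V} {X : Finset V}

theorem singleton_iff {a : V} : IsHSAW g X [a] ↔ a ∈ X :=
  ⟨fun H => (H.2.2.2 a List.mem_cons_self).2 rfl, fun ha =>
    ⟨List.cons_ne_nil _ _, List.nodup_singleton a, List.isChain_singleton a, by simp [ha]⟩⟩

theorem of_append_right {l₁ l₂ : List V} (H : IsHSAW g X (l₁ ++ l₂)) (hl₂ : l₂ ≠ []) :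
    IsHSAW g X l₂ := by
  obtain ⟨-, hnd, hch, hX⟩ := H
  refine ⟨hl₂, hnd.of_append_right, hch.right_of_append, fun v hv => ?_⟩
  rw [← List.getLast?_append_of_ne_nil l₁ hl₂]
  exact hX v (List.mem_append_right l₁ hv)

theorem exists_mem_getLast?_eq {l : List V} (H : IsHSAW g X l) : ∃ b ∈ X, l.getLast? = some b :=
  ⟨l.getLast H.1, (H.2.2.2 _ (List.getLast_mem H.1)).2 (List.getLast?_eq_some_getLast H.1),
    List.getLast?_eq_some_getLast H.1⟩

theorem eq_nil_of_cons {a : V} {l : List V} (H : IsHSAW g X (a :: l)) (ha : a ∈ X) : l = [] := by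
  by_contra hl
  have hlast : l.getLast? = some a := by
    rw [← List.getLast?_append_of_ne_nil [a] hl]
    exact (H.2.2.2 a List.mem_cons_self).1 ha
  exact (List.nodup_cons.1 H.2.1).1 (List.mem_of_getLast? hlast)

theorem cons {a b : V} {l : List V} (H : IsHSAW g X (b :: l)) (ha : a ∉ X) (hal : a ∉ b :: l)
    (hab : g a = some b) : IsHSAW g X (a :: b :: l) := by
  obtain ⟨-, hnd, hch, hX⟩ := H
  refine ⟨List.cons_ne_nil _ _, List.nodup_cons.2 ⟨hal, hnd⟩,
    List.isChain_cons_cons.2 ⟨hab, hch⟩, fun v hv => ?_⟩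
  rw [show a :: b :: l = [a] ++ b :: l from rfl,
    List.getLast?_append_of_ne_nil [a] (List.cons_ne_nil _ _)]
  rcases List.mem_cons.1 hv with rfl | hv
  · exact iff_of_false ha fun hlast => hal (List.mem_of_getLast? hlast)
  · exact hX v hv

theorem reachable_head {a : V} {l : List V} (H : IsHSAW g X (a :: l)) : Reachable g X a := by
  induction l generalizing a with
  | nil => exact ⟨a, singleton_iff.1 H, .refl⟩
  | cons b l ih =>
    obtain ⟨s, hs, hsb⟩ := ih (H.of_append_right (l₁ := [a]) (List.cons_ne_nil _ _))
    exact ⟨s, hs, hsb.tail (List.isChain_cons_cons.1 H.2.2.1).1⟩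

theorem tail_eq {a : V} : ∀ {l₁ l₂ : List V},
    IsHSAW g X (a :: l₁) → IsHSAW g X (a :: l₂) → l₁ = l₂
  | [], [], _, _ => rfl
  | [], _ :: _, H₁, H₂ => (H₂.eq_nil_of_cons (singleton_iff.1 H₁)).symm
  | _ :: _, [], H₁, H₂ => H₁.eq_nil_of_cons (singleton_iff.1 H₂)
  | b₁ :: l₁, b₂ :: l₂, H₁, H₂ => by
    have hb : b₁ = b₂ := Option.some_injective _ <|
      (List.isChain_cons_cons.1 H₁.2.2.1).1.symm.trans (List.isChain_cons_cons.1 H₂.2.2.1).1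
    subst hb
    rw [tail_eq (H₁.of_append_right (l₁ := [a]) (List.cons_ne_nil _ _))
      (H₂.of_append_right (l₁ := [a]) (List.cons_ne_nil _ _))]

theorem exists_of_reachable {v : V} (hv : Reachable g X v) : ∃ l, IsHSAW g X (v :: l) := by
  obtain ⟨s, hs, hsv⟩ := hv
  induction hsv with
  | refl => exact ⟨[], singleton_iff.2 hs⟩
  | @tail b c _ hcb ih =>
    obtain ⟨l, hl⟩ := ih
    by_cases hc : c ∈ X
    · exact ⟨[], singleton_iff.2 hc⟩
    by_cases hcl : c ∈ b :: l
    · obtain ⟨l₁, l₂, hsplit⟩ := List.append_of_mem hcl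
      rw [hsplit] at hl
      exact ⟨l₂, hl.of_append_right (List.cons_ne_nil _ _)⟩
    · exact ⟨b :: l, hl.cons hc hcl hcb⟩

end IsHSAW

section WalksInto

variable {V : Type} [Fintype V]

theorem finite_setOf_nodup_getLast?_mem (VI : Finset V) :
    {l : List V | l.Nodup ∧ ∃ v ∈ VI, l.getLast? = some v}.Finite :=
  (List.finite_length_le V (Fintype.card V)).subset fun _ hl => hl.1.length_le_card

def walksInto (VI : Finset V) : Finset (List V) :=
  (finite_setOf_nodup_getLast?_mem VI).toFinset

theorem mem_walksInto {VI : Finset V} {l : List V} :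
    l ∈ walksInto VI ↔ l.Nodup ∧ ∃ v ∈ VI, l.getLast? = some v :=
  Set.Finite.mem_toFinset _

end WalksInto

section Spread

variable {V : Type} [Fintype V] [DecidableEq V]

theorem card_filter_isHSAW_walksInto (g : V → Option V) {X VI : Finset V} (hX : X ⊆ VI) :
    ((walksInto VI).filter (IsHSAW g X)).card = Nat.card {v : V // Reachable g X v} := by
  rw [Nat.card_eq_fintype_card, Fintype.card_subtype]
  refine Finset.card_bij (fun l hl => l.head (Finset.mem_filter.1 hl).2.1) ?_ ?_ ?_
  · rintro (_ | ⟨a, l⟩) hl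
    · exact absurd rfl (Finset.mem_filter.1 hl).2.1
    · exact Finset.mem_filter.2 ⟨Finset.mem_univ a, (Finset.mem_filter.1 hl).2.reachable_head⟩
  · intro l₁ hl₁ l₂ hl₂ ha
    obtain ⟨a, l₁, rfl⟩ := List.exists_cons_of_ne_nil (Finset.mem_filter.1 hl₁).2.1
    obtain ⟨_, l₂, rfl⟩ := List.exists_cons_of_ne_nil (Finset.mem_filter.1 hl₂).2.1
    subst ha
    exact congrArg (a :: ·) <|
      IsHSAW.tail_eq (Finset.mem_filter.1 hl₁).2 (Finset.mem_filter.1 hl₂).2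
  · intro v hv
    obtain ⟨l, hl⟩ := IsHSAW.exists_of_reachable (Finset.mem_filter.1 hv).2
    obtain ⟨b, hb, hlast⟩ := hl.exists_mem_getLast?_eq
    exact ⟨v :: l, Finset.mem_filter.2 ⟨mem_walksInto.2 ⟨hl.2.1, b, hX hb, hlast⟩, hl⟩,
      rfl⟩

theorem sum_walkProb_walksInto (w : V → V → ℝ) (VI : Finset V) (p : V → ℝ) :
    ∑ l ∈ walksInto VI, walkProb w VI p l = influenceVI w VI p := by
  calc ∑ l ∈ walksInto VI, walkProb w VI p l
      = ∑ X ∈ VI.powerset, ∑ g : V → Option V, ∑ l ∈ walksInto VI,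
          if IsHSAW g X l then sampleProb w g * seedProb VI p X else 0 := by
        simp only [walkProb]
        rw [Finset.sum_comm, Finset.sum_congr rfl fun g _ => Finset.sum_comm, Finset.sum_comm]
    _ = ∑ X ∈ VI.powerset, ∑ g : V → Option V,
          ((walksInto VI).filter (IsHSAW g X)).card * (sampleProb w g * seedProb VI p X) := by
        simp only [← Finset.sum_filter, Finset.sum_const, nsmul_eq_mul]
    _ = influenceVI w VI p := by
        simp only [influenceVI, influence, Finset.mul_sum]
        refine Finset.sum_congr rfl fun X hX => Finset.sum_congr rfl fun g _ => ?_
        rw [card_filter_isHSAW_walksInto g (Finset.mem_powerset.1 hX)]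
        ring

end Spread

theorem stmt_0_general {V : Type} [Fintype V] [DecidableEq V]
    (w : V → V → ℝ)
    (VI : Finset V) (p : V → ℝ)
    (T : Finset (V × V)) :
    (∑' h : {l : List V // l.Nodup ∧ ∃ v ∈ VI, l.getLast? = some v},
        walkProb w VI p h.val) = influenceVI w VI p ∧
    (∑' h : {l : List V // (l.Nodup ∧ ∃ v ∈ VI, l.getLast? = some v) ∧
          ∃ e ∈ T, e ∈ walkEdges l},
        walkProb w VI p h.val)
      = influenceVI w VI p
        - influenceVI (fun u v => if (u, v) ∈ T then 0 else w u v) VI p ∧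
    (0 < influenceVI w VI p →
      influenceVI w VI p
          - influenceVI (fun u v => if (u, v) ∈ T then 0 else w u v) VI p
        = influenceVI w VI p *
          ((∑' h : {l : List V // (l.Nodup ∧ ∃ v ∈ VI, l.getLast? = some v) ∧
                ∃ e ∈ T, e ∈ walkEdges l},
              walkProb w VI p h.val) /
            (∑' h : {l : List V // l.Nodup ∧ ∃ v ∈ VI, l.getLast? = some v},
              walkProb w VI p h.val))) := by
  have spread : (∑' h : {l : List V // l.Nodup ∧ ∃ v ∈ VI, l.getLast? = some v},
      walkProb w VI p h.val) = influenceVI w VI p :=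
    (tsum_subtype_eq_sum_of_mem_iff _ (fun _ => mem_walksInto) _).trans
      (sum_walkProb_walksInto w VI p)
  have suspension : (∑' h : {l : List V // (l.Nodup ∧ ∃ v ∈ VI, l.getLast? = some v) ∧
      ∃ e ∈ T, e ∈ walkEdges l}, walkProb w VI p h.val)
      = influenceVI w VI p - influenceVI (fun u v => if (u, v) ∈ T then 0 else w u v) VI p := by
    rw [tsum_subtype_eq_sum_of_mem_iff
        ((walksInto VI).filter fun l => ∃ e ∈ T, e ∈ walkEdges l)
        (fun _ => by rw [Finset.mem_filter, mem_walksInto]),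
      Finset.sum_filter, ← sum_walkProb_walksInto, ← sum_walkProb_walksInto,
      ← Finset.sum_sub_distrib]
    exact Finset.sum_congr rfl fun l hl =>
      (walkProb_sub_walkProb_deleteEdges T w VI p (mem_walksInto.1 hl).1).symm
  refine ⟨spread, suspension, fun hI => ?_⟩
  rw [spread, suspension, mul_div_cancel₀ _ hI.ne']

/-- Theorem 2 (edge version): for a stochastic graph `(V, E, w)`, a
probabilistic suspect set `(VI, p)` and an edge set `T ⊆ E`,
(i) the total walk probability of all hitting self-avoiding walks (walks of
pairwise distinct nodes ending at a node of `VI`) equals `I_𝒢(𝒱_I)`;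
(ii) the total walk probability of those walks whose edge set intersects `T`
equals the influence suspension `D(T, 𝒱_I) = I_𝒢(𝒱_I) − I_{𝒢∖T}(𝒱_I)`;
(iii) hence if `I_𝒢(𝒱_I) > 0` then `D(T, 𝒱_I)` equals `I_𝒢(𝒱_I)` times the
probability that a random HSAW (drawn proportionally to walk probability)
is interdicted by `T`. -/
theorem stmt_0 {V : Type} [Fintype V] [DecidableEq V]
    (E : Finset (V × V)) (w : V → V → ℝ)
    (hw01 : ∀ u v, 0 ≤ w u v ∧ w u v ≤ 1)
    (hwE : ∀ u v, (u, v) ∉ E → w u v = 0)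
    (hwsum : ∀ v, ∑ u : V, w u v ≤ 1)
    (VI : Finset V) (p : V → ℝ) (hp : ∀ v ∈ VI, 0 ≤ p v ∧ p v ≤ 1)
    (T : Finset (V × V)) (hT : T ⊆ E) :
    (∑' h : {l : List V // l.Nodup ∧ ∃ v ∈ VI, l.getLast? = some v},
        walkProb w VI p h.val) = influenceVI w VI p ∧
    (∑' h : {l : List V // (l.Nodup ∧ ∃ v ∈ VI, l.getLast? = some v) ∧
          ∃ e ∈ T, e ∈ walkEdges l},
        walkProb w VI p h.val)
      = influenceVI w VI p
        - influenceVI (fun u v => if (u, v) ∈ T then 0 else w u v) VI p ∧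
    (0 < influenceVI w VI p →
      influenceVI w VI p
          - influenceVI (fun u v => if (u, v) ∈ T then 0 else w u v) VI p
        = influenceVI w VI p *
          ((∑' h : {l : List V // (l.Nodup ∧ ∃ v ∈ VI, l.getLast? = some v) ∧
                ∃ e ∈ T, e ∈ walkEdges l},
              walkProb w VI p h.val) /
            (∑' h : {l : List V // l.Nodup ∧ ∃ v ∈ VI, l.getLast? = some v},
              walkProb w VI p h.val))) :=
  stmt_0_general w VI p T
end
end

section
/- For every stochastic graph 𝒢 = (V, E, w) and every probabilistic suspect set 𝒱_I = (V_I, p), the edge influence-suspension function T ↦ D(T, 𝒱_I) is monotone, i.e. D(T, 𝒱_I) ≤ D(T', 𝒱_I) whenever T ⊆ T' ⊆ E, and submodular, i.e. D(T ∪ {e}, 𝒱_I) − D(T, 𝒱_I) ≥ D(T' ∪ {e}, 𝒱_I) − D(T', 𝒱_I) whenever T ⊆ T' ⊆ E and e ∈ E ∖ T'. -/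
/-!
A live-edge sample of `𝒢 ∖ T` has the law of a live-edge sample `g` of `𝒢` with the edges of
`T` removed, since deleting edges acts independently on the single in-edge of each node. Hence
`D(T)` is a nonnegative combination, over seed sets `X` and samples `g`, of the number of nodes
reachable from `X` in `g` but no longer once `T` is removed. In a sample every node has at most
one live in-edge, so a node survives the removal of `T ∪ U` iff it survives the removal of `T`
and that of `U`: the set `R(T)` of surviving nodes is antitone with `R(T ∪ U) = R(T) ∩ R(U)`.
Then `|R(T')| - |R(T' ∪ {e})| = |R(T') \ R({e})| ≤ |R(T) \ R({e})|` for `T ⊆ T'`, which is the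
submodularity, and monotonicity is the antitonicity of `R`.
-/

noncomputable section
open scoped Classical

/-- Influence suspension of an edge set `T`:
`D(T, 𝒱_I) = I_𝒢(𝒱_I) − I_{𝒢∖T}(𝒱_I)`, where `𝒢∖T` zeroes out the edges of `T`. -/
def suspension {V : Type} [Fintype V] [DecidableEq V]
    (w : V → V → ℝ) (VI : Finset V) (p : V → ℝ) (T : Finset (V × V)) : ℝ :=
  influenceVI w VI p - influenceVI (fun u v => if (u, v) ∈ T then 0 else w u v) VI p

open Finset

theorem Finset.sum_prod_mul_comp_pi {ι α β R : Type*} [Fintype ι] [DecidableEq ι] [Fintype α]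
    [Fintype β] [DecidableEq β] [CommSemiring R]
    (μ : ι → α → R) (k : ι → α → β) (F : (ι → β) → R) :
    ∑ g : ι → α, (∏ i, μ i (g i)) * F (fun i => k i (g i)) =
      ∑ h : ι → β, (∏ i, ∑ a with k i a = h i, μ i a) * F h := by
  rw [← sum_fiberwise univ (fun g i => k i (g i))]
  refine sum_congr rfl fun h _ => ?_
  rw [prod_univ_sum, sum_mul]
  refine sum_congr (by ext g; simp [funext_iff]) fun g hg => ?_
  rw [show (fun i => k i (g i)) = h from
    funext fun i => (mem_filter.1 (Fintype.mem_piFinset.1 hg i)).2]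

namespace LiveEdge

variable {V : Type}

lemma sampleProb_nonneg [Fintype V] {w : V → V → ℝ} (hw : ∀ u v, 0 ≤ w u v)
    (hwsum : ∀ v, ∑ u, w u v ≤ 1) (g : V → Option V) : 0 ≤ sampleProb w g :=
  prod_nonneg fun v _ => by
    cases g v with
    | none => exact sub_nonneg.2 (hwsum v)
    | some u => exact hw u v

lemma seedProb_nonneg [DecidableEq V] {VI : Finset V} {p : V → ℝ}
    (hp : ∀ v ∈ VI, 0 ≤ p v ∧ p v ≤ 1) {X : Finset V} (hX : X ⊆ VI) : 0 ≤ seedProb VI p X :=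
  mul_nonneg (prod_nonneg fun u hu => (hp u (hX hu)).1)
    (prod_nonneg fun v hv => sub_nonneg.2 (hp v (mem_sdiff.1 hv).1).2)

section DeleteEdges

variable [DecidableEq V]

def deleteEdges (T : Finset (V × V)) (g : V → Option V) : V → Option V :=
  fun v => (g v).filter fun u => (u, v) ∉ T

lemma deleteEdges_eq_some {T : Finset (V × V)} {g : V → Option V} {u v : V} :
    deleteEdges T g v = some u ↔ g v = some u ∧ (u, v) ∉ T := by
  simp [deleteEdges, Option.filter_eq_some_iff]

lemma reachable_deleteEdges_anti {T T' : Finset (V × V)} (hTT' : T ⊆ T')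
    {g : V → Option V} {X : Finset V} {v : V} (h : Reachable (deleteEdges T' g) X v) :
    Reachable (deleteEdges T g) X v := by
  obtain ⟨s, hs, hr⟩ := h
  refine ⟨s, hs, Relation.ReflTransGen.mono (fun x y hxy => ?_) s v hr⟩
  obtain ⟨hg, hT'⟩ := deleteEdges_eq_some.1 hxy
  exact deleteEdges_eq_some.2 ⟨hg, fun hT => hT' (hTT' hT)⟩

lemma reachable_deleteEdges_union {T U : Finset (V × V)} {g : V → Option V} {X : Finset V}
    {v : V} :
    Reachable (deleteEdges (T ∪ U) g) X v ↔
      Reachable (deleteEdges T g) X v ∧ Reachable (deleteEdges U g) X v := by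
  refine ⟨fun h => ⟨reachable_deleteEdges_anti subset_union_left h,
    reachable_deleteEdges_anti subset_union_right h⟩, ?_⟩
  rintro ⟨⟨s, hs, hr⟩, hU⟩
  induction hr with
  | refl => exact ⟨s, hs, .refl⟩
  | @tail b c _ hbc ih =>
    obtain ⟨hgc, hbcT⟩ := deleteEdges_eq_some.1 hbc
    obtain ⟨s', hs', hr'⟩ := hU
    -- `c` has at most one live in-edge, so a path to `c` avoiding `U` either starts at `c`
    -- or ends with the same edge `(b, c)`
    rcases hr'.cases_tail with rfl | ⟨b', hb', hb'c⟩
    · exact ⟨_, hs', .refl⟩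
    obtain ⟨hgc', hbcU⟩ := deleteEdges_eq_some.1 hb'c
    obtain rfl : b' = b := Option.some.inj (hgc'.symm.trans hgc)
    obtain ⟨t, ht, htr⟩ := ih ⟨s', hs', hb'⟩
    exact ⟨t, ht, htr.tail (deleteEdges_eq_some.2 ⟨hgc, by simp [hbcT, hbcU]⟩)⟩

end DeleteEdges

def reachSet [Fintype V] (g : V → Option V) (X : Finset V) : Finset V :=
  univ.filter (Reachable g X)

lemma natCard_reachable [Fintype V] (g : V → Option V) (X : Finset V) :
    Nat.card {v : V // Reachable g X v} = #(reachSet g X) := by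
  rw [Nat.card_eq_fintype_card, Fintype.card_subtype, reachSet]

variable [Fintype V] [DecidableEq V]

lemma reachSet_deleteEdges_anti {T T' : Finset (V × V)} (hTT' : T ⊆ T') (g : V → Option V)
    (X : Finset V) : reachSet (deleteEdges T' g) X ⊆ reachSet (deleteEdges T g) X := by
  intro v
  simpa [reachSet] using reachable_deleteEdges_anti hTT'

lemma reachSet_deleteEdges_union (T U : Finset (V × V)) (g : V → Option V) (X : Finset V) :
    reachSet (deleteEdges (T ∪ U) g) X =
      reachSet (deleteEdges T g) X ∩ reachSet (deleteEdges U g) X := by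
  ext v
  simp [reachSet, reachable_deleteEdges_union]

lemma card_reachSet_deleteEdges_sub_le {T T' : Finset (V × V)} (hTT' : T ⊆ T')
    (U : Finset (V × V)) (g : V → Option V) (X : Finset V) :
    (#(reachSet (deleteEdges T' g) X) : ℝ) - #(reachSet (deleteEdges (T' ∪ U) g) X) ≤
      #(reachSet (deleteEdges T g) X) - #(reachSet (deleteEdges (T ∪ U) g) X) := by
  have hcard : ∀ S : Finset (V × V), (#(reachSet (deleteEdges S g) X) : ℝ) -
      #(reachSet (deleteEdges (S ∪ U) g) X) =
        #(reachSet (deleteEdges S g) X \ reachSet (deleteEdges U g) X) := by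
    intro S
    rw [reachSet_deleteEdges_union, ← card_sdiff_add_card_inter _ (reachSet (deleteEdges U g) X)]
    push_cast
    ring
  rw [hcard, hcard]
  exact_mod_cast card_le_card (sdiff_subset_sdiff (reachSet_deleteEdges_anti hTT' g X) le_rfl)

def inEdgeProb (w : V → V → ℝ) (v : V) (a : Option V) : ℝ :=
  a.elim (1 - ∑ u, w u v) (w · v)

lemma sum_inEdgeProb_filter (w : V → V → ℝ) (T : Finset (V × V)) (v : V) (o : Option V) :
    ∑ a : Option V with a.filter (fun u => (u, v) ∉ T) = o, inEdgeProb w v a =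
      inEdgeProb (fun u v => if (u, v) ∈ T then 0 else w u v) v o := by
  rw [sum_filter, Fintype.sum_option]
  cases o with
  | some u => simp [inEdgeProb, ite_and, ite_not]
  | none =>
    have hsplit : ∑ u, w u v =
        ∑ u, (if (u, v) ∈ T then w u v else 0) + ∑ u, (if (u, v) ∈ T then 0 else w u v) := by
      rw [← sum_add_distrib]
      exact sum_congr rfl fun u _ => by split_ifs <;> simp
    simp [inEdgeProb]
    linarith

lemma sum_sampleProb_mul_deleteEdges (w : V → V → ℝ) (T : Finset (V × V))
    (F : (V → Option V) → ℝ) :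
    ∑ g, sampleProb w g * F (deleteEdges T g) =
      ∑ g, sampleProb (fun u v => if (u, v) ∈ T then 0 else w u v) g * F g := by
  have h := sum_prod_mul_comp_pi (inEdgeProb w)
    (fun v (a : Option V) => a.filter fun u => (u, v) ∉ T) F
  simp only [sum_inEdgeProb_filter] at h
  -- `sampleProb w g` unfolds to `∏ v, inEdgeProb w v (g v)`
  exact h

lemma influenceVI_deleteEdges (w : V → V → ℝ) (VI : Finset V) (p : V → ℝ)
    (T : Finset (V × V)) :
    influenceVI (fun u v => if (u, v) ∈ T then 0 else w u v) VI p =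
      ∑ X ∈ VI.powerset, ∑ g, seedProb VI p X * sampleProb w g *
        #(reachSet (deleteEdges T g) X) := by
  refine sum_congr rfl fun X _ => ?_
  simp only [influence, natCard_reachable, ← sum_sampleProb_mul_deleteEdges, mul_sum, mul_assoc]

lemma suspension_sub_suspension (w : V → V → ℝ) (VI : Finset V) (p : V → ℝ)
    (T U : Finset (V × V)) :
    suspension w VI p U - suspension w VI p T =
      ∑ X ∈ VI.powerset, ∑ g, seedProb VI p X * sampleProb w g *
        ((#(reachSet (deleteEdges T g) X) : ℝ) - #(reachSet (deleteEdges U g) X)) := by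
  simp only [suspension, influenceVI_deleteEdges, mul_sub, sum_sub_distrib]
  ring

end LiveEdge

open LiveEdge in
theorem stmt_1_general {V : Type} [Fintype V] [DecidableEq V]
    (E : Finset (V × V)) (w : V → V → ℝ)
    (hw01 : ∀ u v, 0 ≤ w u v ∧ w u v ≤ 1)
    (hwsum : ∀ v, ∑ u : V, w u v ≤ 1)
    (VI : Finset V) (p : V → ℝ) (hp : ∀ v ∈ VI, 0 ≤ p v ∧ p v ≤ 1) :
    (∀ T T' : Finset (V × V), T ⊆ T' → T' ⊆ E →
      suspension w VI p T ≤ suspension w VI p T') ∧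
    (∀ T T' : Finset (V × V), T ⊆ T' → T' ⊆ E → ∀ e ∈ E \ T',
      suspension w VI p (T' ∪ {e}) - suspension w VI p T'
        ≤ suspension w VI p (T ∪ {e}) - suspension w VI p T) := by
  have hweight : ∀ X ∈ VI.powerset, ∀ g, 0 ≤ seedProb VI p X * sampleProb w g :=
    fun X hX g => mul_nonneg (seedProb_nonneg hp (mem_powerset.1 hX))
      (sampleProb_nonneg (fun u v => (hw01 u v).1) hwsum g)
  refine ⟨fun T T' hTT' _ => ?_, fun T T' hTT' _ e _ => ?_⟩
  · rw [← sub_nonneg, suspension_sub_suspension]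
    refine sum_nonneg fun X hX => sum_nonneg fun g _ => mul_nonneg (hweight X hX g) ?_
    exact sub_nonneg.2 (by exact_mod_cast card_le_card (reachSet_deleteEdges_anti hTT' g X))
  · rw [suspension_sub_suspension, suspension_sub_suspension]
    exact sum_le_sum fun X hX => sum_le_sum fun g _ =>
      mul_le_mul_of_nonneg_left (card_reachSet_deleteEdges_sub_le hTT' {e} g X) (hweight X hX g)

/-- Corollary 3: the edge influence-suspension function `T ↦ D(T, 𝒱_I)` is
monotone and submodular. -/
theorem stmt_1 {V : Type} [Fintype V] [DecidableEq V]
    (E : Finset (V × V)) (w : V → V → ℝ)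
    (hw01 : ∀ u v, 0 ≤ w u v ∧ w u v ≤ 1)
    (hwE : ∀ u v, (u, v) ∉ E → w u v = 0)
    (hwsum : ∀ v, ∑ u : V, w u v ≤ 1)
    (VI : Finset V) (p : V → ℝ) (hp : ∀ v ∈ VI, 0 ≤ p v ∧ p v ≤ 1) :
    (∀ T T' : Finset (V × V), T ⊆ T' → T' ⊆ E →
      suspension w VI p T ≤ suspension w VI p T') ∧
    (∀ T T' : Finset (V × V), T ⊆ T' → T' ⊆ E → ∀ e ∈ E \ T',
      suspension w VI p (T' ∪ {e}) - suspension w VI p T'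
        ≤ suspension w VI p (T ∪ {e}) - suspension w VI p T) :=
  stmt_1_general E w hw01 hwsum VI p hp
end
end

section
/- Walk probability: for every stochastic graph 𝒢 = (V, E, w), every probabilistic suspect set 𝒱_I = (V_I, p), and every fixed finite sequence h = ⟨v₁,…,v_l⟩ of pairwise distinct nodes with v_l ∈ V_I, the probability over the random pair (g, X) that h is an HSAW of (g, X) equals p(v_l) · ∏_{u ∈ V_I ∩ {v₁,…,v_{l−1}}} (1 − p(u)) · ∏_{i=1}^{l−1} w(v_{i+1}, v_i). -/
noncomputable section
open scoped Classical

/-!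
The event that `h` is an HSAW of `(g, X)` splits into an event about `g` alone (every node of
`h` but the last chooses its successor in `h` as parent) and an event about `X` alone (the last
node is a seed, the earlier ones are not). The two are independent, so the probability is the
product of two marginals of product distributions: for `g`, each constrained node contributes
the weight of its prescribed edge and each free node a total mass of one; for `X`, likewise
with `p` and `1 - p`.
-/

namespace List

variable {α : Type*}

theorem zip_tail_eq_zip_dropLast_tail (l : List α) : l.zip l.tail = l.dropLast.zip l.tail := by
  induction l with
  | nil => rfl
  | cons a t ih => cases t with
    | nil => rfl
    | cons b t => simp_all

theorem map_fst_zip_tail_s3 (l : List α) : (l.zip l.tail).map Prod.fst = l.dropLast := by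
  rw [zip_tail_eq_zip_dropLast_tail, map_fst_zip (by simp)]

theorem isChain_iff_forall_mem_zip_tail_s3 {R : α → α → Prop} {l : List α} :
    l.IsChain R ↔ ∀ q ∈ l.zip l.tail, R q.1 q.2 := by
  rw [isChain_iff_forall₂, forall₂_iff_zip, zip_tail_eq_zip_dropLast_tail]
  simp

theorem getLast_notMem_dropLast {l : List α} (hne : l ≠ []) (hnd : l.Nodup) :
    l.getLast hne ∉ l.dropLast := by
  rw [← dropLast_concat_getLast hne, nodup_append] at hnd
  exact fun hmem => hnd.2.2 _ hmem _ (mem_singleton_self _) rfl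

end List

section

variable {V : Type}

theorem isHSAW_iff [DecidableEq V] {g : V → Option V} {X : Finset V} {h : List V}
    (hne : h ≠ []) (hnd : h.Nodup) :
    IsHSAW g X h ↔ (∀ q ∈ h.zip h.tail, g q.1 = some q.2) ∧
      h.getLast hne ∈ X ∧ ∀ v ∈ h.dropLast, v ∉ X := by
  have hmem : ∀ v, v ∈ h ↔ v ∈ h.dropLast ∨ v = h.getLast hne := fun v => by
    conv_lhs => rw [← List.dropLast_concat_getLast hne]
    simp
  have hlast := List.getLast_notMem_dropLast hne hnd
  have hlast? := List.getLast?_eq_some_getLast hne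
  unfold IsHSAW
  constructor
  · rintro ⟨-, -, hchain, hX⟩
    refine ⟨List.isChain_iff_forall_mem_zip_tail_s3.1 hchain, ?_, ?_⟩ <;> grind
  · rintro ⟨hchain, hX⟩
    refine ⟨hne, hnd, List.isChain_iff_forall_mem_zip_tail_s3.2 hchain, ?_⟩
    grind

theorem sum_sampleProb_ite_forall_mem [Fintype V] [DecidableEq V] (w : V → V → ℝ)
    (P : List (V × V)) (hP : (P.map Prod.fst).Nodup) :
    (∑ g : V → Option V, if ∀ q ∈ P, g q.1 = some q.2 then sampleProb w g else 0)
      = (P.map fun q => w q.2 q.1).prod := by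
  set T : V → Finset (Option V) :=
    fun v => Finset.univ.filter fun o => ∀ q ∈ P, q.1 = v → o = some q.2
  set F : V → ℝ := fun v => ∑ o ∈ T v, o.elim (1 - ∑ u : V, w u v) (fun u => w u v)
  have hfilter : Finset.univ.filter (fun g : V → Option V => ∀ q ∈ P, g q.1 = some q.2)
      = Fintype.piFinset T := by
    ext g
    simp only [Finset.mem_filter, Finset.mem_univ, true_and, Fintype.mem_piFinset, T]
    grind
  have hF_of_notMem : ∀ v ∉ P.map Prod.fst, F v = 1 := fun v hv => by
    have : T v = Finset.univ := by
      ext o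
      simp only [List.mem_map] at hv
      grind
    simp [F, this, Fintype.sum_option]
  have hF_of_mem : ∀ q ∈ P, F q.1 = w q.2 q.1 := fun q hq => by
    have : T q.1 = {some q.2} := by
      ext o
      simp only [Finset.mem_filter, Finset.mem_univ, true_and, Finset.mem_singleton, T]
      exact ⟨fun ho => ho q hq rfl,
        fun ho q' hq' h1 => by rw [ho, List.inj_on_of_nodup_map hP hq' hq h1]⟩
    simp [F, this]
  calc _ = ∑ g ∈ Fintype.piFinset T, sampleProb w g := by rw [← Finset.sum_filter, hfilter]
    _ = ∏ v, F v := by rw [Finset.prod_univ_sum]; rfl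
    _ = ∏ v ∈ (P.map Prod.fst).toFinset, F v :=
      (Finset.prod_subset (Finset.subset_univ _)
        fun v _ hv => hF_of_notMem v (by simpa using hv)).symm
    _ = ((P.map Prod.fst).map F).prod := List.prod_toFinset F hP
    _ = _ := by
      rw [List.map_map]
      exact congrArg _ (List.map_congr_left fun q hq => hF_of_mem q hq)

theorem sum_seedProb_ite_subset_disjoint [DecidableEq V] {VI A B : Finset V} (p : V → ℝ)
    (hA : A ⊆ VI) (hB : B ⊆ VI) (hAB : Disjoint A B) :
    (∑ X ∈ VI.powerset, if A ⊆ X ∧ Disjoint B X then seedProb VI p X else 0)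
      = (∏ u ∈ A, p u) * ∏ u ∈ B, (1 - p u) := by
  -- `Finset.prod_add` expands `∏ i ∈ VI, (f i + g i)` into exactly this constrained sum.
  have hterm : ∀ X ∈ VI.powerset,
      (∏ i ∈ X, if i ∉ B then p i else 0) * (∏ i ∈ VI \ X, if i ∉ A then 1 - p i else 0)
        = if A ⊆ X ∧ Disjoint B X then seedProb VI p X else 0 := fun X hX => by
    rw [Finset.mem_powerset] at hX
    rw [Finset.prod_ite_zero, Finset.prod_ite_zero, ite_zero_mul_ite_zero, seedProb]
    congr 1
    simp only [Finset.mem_sdiff, Finset.disjoint_right, and_imp, not_imp_not]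
    grind
  have hfactor : ∀ i ∈ VI, (if i ∉ B then p i else 0) + (if i ∉ A then 1 - p i else 0)
      = (if i ∈ A then p i else 1) * (if i ∈ B then 1 - p i else 1) := fun i _ => by
    have : i ∈ A → i ∉ B := fun hi => Finset.disjoint_left.1 hAB hi
    split_ifs <;> grind
  rw [← Finset.sum_congr rfl hterm, ← Finset.prod_add, Finset.prod_congr rfl hfactor,
    Finset.prod_mul_distrib, Finset.prod_ite_mem, Finset.prod_ite_mem,
    Finset.inter_eq_right.2 hA, Finset.inter_eq_right.2 hB]

end

theorem stmt_3_general {V : Type} [Fintype V] [DecidableEq V]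
    (w : V → V → ℝ)
    (VI : Finset V) (p : V → ℝ)
    (h : List V) (hne : h ≠ []) (hnd : h.Nodup)
    (hlast : h.getLast hne ∈ VI) :
    walkProb w VI p h
      = p (h.getLast hne)
        * (∏ u ∈ VI.filter (fun u => u ∈ h.dropLast), (1 - p u))
        * ((h.zip h.tail).map (fun e : V × V => w e.2 e.1)).prod := by
  set l := h.getLast hne
  set B := VI.filter (fun u => u ∈ h.dropLast)
  have hlB : Disjoint {l} B := by
    simpa [B] using fun _ => List.getLast_notMem_dropLast hne hnd
  have hseed : ∀ X ∈ VI.powerset,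
      (l ∈ X ∧ ∀ v ∈ h.dropLast, v ∉ X) ↔ {l} ⊆ X ∧ Disjoint B X := fun X hX => by
    rw [Finset.mem_powerset] at hX
    simp only [Finset.singleton_subset_iff, Finset.disjoint_left, Finset.mem_filter, B]
    grind
  have hkeys : ((h.zip h.tail).map Prod.fst).Nodup := by
    rw [List.map_fst_zip_tail_s3]
    exact hnd.sublist (List.dropLast_sublist h)
  calc walkProb w VI p h
      = ∑ g : V → Option V, ∑ X ∈ VI.powerset,
          (if ∀ q ∈ h.zip h.tail, g q.1 = some q.2 then sampleProb w g else 0)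
            * (if {l} ⊆ X ∧ Disjoint B X then seedProb VI p X else 0) := by
        refine Finset.sum_congr rfl fun g _ => Finset.sum_congr rfl fun X hX => ?_
        rw [ite_zero_mul_ite_zero]
        exact if_congr ((isHSAW_iff hne hnd).trans (and_congr_right' (hseed X hX))) rfl rfl
    _ = _ := by
      rw [← Finset.sum_mul_sum, sum_sampleProb_ite_forall_mem w _ hkeys,
        sum_seedProb_ite_subset_disjoint p (by simpa using hlast) (Finset.filter_subset _ _) hlB,
        Finset.prod_singleton]
      ring

/-- Walk probability: for a fixed nonempty walk `h` of pairwise distinct nodes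
ending at a node of `VI`, the probability over the random pair `(g, X)` that
`h` is an HSAW of `(g, X)` equals
`p(v_l) · ∏_{u ∈ VI ∩ {v₁,…,v_{l−1}}} (1 − p u) · ∏_{i=1}^{l−1} w(vᵢ₊₁, vᵢ)`. -/
theorem stmt_3 {V : Type} [Fintype V] [DecidableEq V]
    (E : Finset (V × V)) (w : V → V → ℝ)
    (hw01 : ∀ u v, 0 ≤ w u v ∧ w u v ≤ 1)
    (hwE : ∀ u v, (u, v) ∉ E → w u v = 0)
    (hwsum : ∀ v, ∑ u : V, w u v ≤ 1)
    (VI : Finset V) (p : V → ℝ) (hp : ∀ v ∈ VI, 0 ≤ p v ∧ p v ≤ 1)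
    (h : List V) (hne : h ≠ []) (hnd : h.Nodup)
    (hlast : h.getLast hne ∈ VI) :
    walkProb w VI p h
      = p (h.getLast hne)
        * (∏ u ∈ VI.filter (fun u => u ∈ h.dropLast), (1 - p u))
        * ((h.zip h.tail).map (fun e : V × V => w e.2 e.1)).prod :=
  stmt_3_general w VI p h hne hnd hlast
end
end

section
/- Sample-complexity guarantee for greedy on samples (step S1 of Lemma A.2): assume the sampling framework with ground set E of size m, distribution μ, constant I > 0, integer k with 1 ≤ k ≤ m, ε ∈ (0,1), δ ∈ (0,1), and OPT_k > 0. Suppose the number of independent samples satisfies N ≥ (2 − 1/e)² (2 + (2/3)ε) · I · (ln(6/δ) + ln C(m,k)) / (OPT_k · ε²), where C(m,k) is the binomial coefficient. Then for every function A that maps each sample sequence (R₁,…,R_N) to a size-k set T̂ ⊆ E satisfying Cov(T̂) ≥ (1 − 1/e) · max{Cov(T) : T ⊆ E, |T| = k} on that sample sequence, we have Pr[D(A(R₁,…,R_N)) ≥ (1 − 1/e − ε) · OPT_k] ≥ 1 − δ/3, the probability being over the N independent samples. -/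
/-!
Let `T₀` be optimal and `μ = N · Pr[R ∩ T₀ ≠ ∅]` its expected coverage. A Chernoff bound keeps
`Cov(T₀) ≥ (1 - x) μ` except with probability `exp (-x²μ/2)`; a Bernstein-type bound and a union
bound over the `C(m, k)` sets of size `k` keep `Cov(T) ≤ N · Pr[R ∩ T ≠ ∅] + x μ` for all of them
except with probability `C(m, k) · exp (-x²μ/(2 + 2x/3))`. On the remaining event the output `T̂`
satisfies `N · Pr[R ∩ T̂ ≠ ∅] ≥ Cov(T̂) - x μ ≥ (1 - 1/e)(1 - x) μ - x μ`, which is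
`(1 - 1/e - ε) μ` for `x = ε / (2 - 1/e)`; the sample size makes each failure probability at
most `δ/6`.
-/

open Finset Real

lemma exp_neg_sub_one_add_le {x : ℝ} (hx0 : 0 ≤ x) (hx1 : x ≤ 1) :
    exp (-x) - 1 + x ≤ x ^ 2 / 2 := by
  have h := exp_bound (x := -x) (by rwa [abs_neg, abs_of_nonneg hx0]) (n := 4) (by norm_num)
  rw [abs_neg, abs_of_nonneg hx0] at h
  have h' := (abs_sub_le_iff.1 h).1
  norm_num [sum_range_succ, Nat.factorial] at h'
  nlinarith [pow_le_pow_of_le_one hx0 hx1 (show 3 ≤ 4 by norm_num), pow_nonneg hx0 3]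

lemma exp_sub_one_sub_le {t : ℝ} (ht0 : 0 ≤ t) (ht1 : t ≤ 1) :
    exp t - 1 - t ≤ t ^ 2 / (2 - 2 * t / 3) := by
  have h := exp_bound' ht0 ht1 (n := 4) (by norm_num)
  norm_num [sum_range_succ, Nat.factorial] at h
  have hd : 0 < 2 - 2 * t / 3 := by linarith
  -- `t²/(2 - 2t/3) - (t²/2 + t³/6 + 5t⁴/96) = (t⁴ + 5t⁵) / (144 (2 - 2t/3))`
  have key : t ^ 2 / 2 + t ^ 3 / 6 + 5 * t ^ 4 / 96 ≤ t ^ 2 / (2 - 2 * t / 3) := by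
    rw [le_div_iff₀ hd]
    nlinarith [pow_nonneg ht0 4, pow_nonneg ht0 5]
  linarith

section SampleSequences

variable {α : Type*} [Fintype α] (q : α → ℝ) (N : ℕ)

open Classical in
noncomputable def iidProb (P : (Fin N → α) → Prop) : ℝ :=
  ∑ s ∈ univ.filter P, ∏ j, q (s j)

def hitProb (hit : α → Prop) [DecidablePred hit] : ℝ :=
  ∑ R ∈ univ.filter hit, q R

variable {N} in
def hitCount (hit : α → Prop) [DecidablePred hit] (s : Fin N → α) : ℕ :=
  #{j | hit (s j)}

variable {q}

lemma iidProb_nonneg (hq0 : ∀ R, 0 ≤ q R) (P : (Fin N → α) → Prop) : 0 ≤ iidProb q N P :=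
  sum_nonneg fun s _ => prod_nonneg fun j _ => hq0 (s j)

lemma iidProb_mono (hq0 : ∀ R, 0 ≤ q R) {P Q : (Fin N → α) → Prop}
    (h : ∀ s, P s → Q s) :
    iidProb q N P ≤ iidProb q N Q :=
  sum_le_sum_of_subset_of_nonneg (fun s => by simpa using h s)
    fun s _ _ => prod_nonneg fun j _ => hq0 (s j)

lemma iidProb_or_le (hq0 : ∀ R, 0 ≤ q R) (P Q : (Fin N → α) → Prop) :
    iidProb q N (fun s => P s ∨ Q s) ≤ iidProb q N P + iidProb q N Q := by
  classical
  have hw (s : Fin N → α) : 0 ≤ ∏ j, q (s j) := prod_nonneg fun j _ => hq0 (s j)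
  have hunion := sum_union_inter (s₁ := univ.filter P) (s₂ := univ.filter Q)
    (f := fun s => ∏ j, q (s j))
  have hinter : 0 ≤ ∑ s ∈ univ.filter P ∩ univ.filter Q, ∏ j, q (s j) :=
    sum_nonneg fun s _ => hw s
  calc iidProb q N (fun s => P s ∨ Q s)
      ≤ ∑ s ∈ univ.filter P ∪ univ.filter Q, ∏ j, q (s j) :=
        sum_le_sum_of_subset_of_nonneg (fun s => by simp) fun s _ _ => hw s
    _ ≤ iidProb q N P + iidProb q N Q := by
        unfold iidProb
        linarith

lemma iidProb_exists_le (hq0 : ∀ R, 0 ≤ q R) {ι : Type*} (𝒯 : Finset ι)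
    (P : ι → (Fin N → α) → Prop) :
    iidProb q N (fun s => ∃ T ∈ 𝒯, P T s) ≤ ∑ T ∈ 𝒯, iidProb q N (P T) := by
  classical
  induction 𝒯 using Finset.induction_on with
  | empty => simp [iidProb]
  | insert T 𝒯 hT ih =>
    simp only [mem_insert, exists_eq_or_imp, sum_insert hT]
    exact (iidProb_or_le N hq0 _ _).trans (by gcongr)

lemma one_sub_iidProb_le (hq1 : ∑ R, q R = 1) (P : (Fin N → α) → Prop) :
    1 - iidProb q N (fun s => ¬ P s) ≤ iidProb q N P := by
  classical
  have htotal : ∑ s : Fin N → α, ∏ j, q (s j) = 1 := by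
    rw [← Fintype.sum_pow, hq1, one_pow]
  have hsplit : iidProb q N P + iidProb q N (fun s => ¬ P s) = 1 := by
    rw [← htotal, iidProb, iidProb]
    -- the two sides differ only in their (subsingleton) decidability instances
    convert sum_filter_add_sum_filter_not univ P fun s => ∏ j, q (s j)
  linarith

lemma hitProb_le_one (hq0 : ∀ R, 0 ≤ q R) (hq1 : ∑ R, q R = 1) (hit : α → Prop)
    [DecidablePred hit] :
    hitProb q hit ≤ 1 :=
  hq1 ▸ sum_le_sum_of_subset_of_nonneg (filter_subset _ _) fun R _ _ => hq0 R

lemma sum_prod_mul_exp_hitCount (hq1 : ∑ R, q R = 1) (hit : α → Prop) [DecidablePred hit]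
    (t : ℝ) :
    ∑ s : Fin N → α, (∏ j, q (s j)) * exp (t * hitCount hit s)
      = (1 + hitProb q hit * (exp t - 1)) ^ N := by
  set g : α → ℝ := fun R => q R * exp (if hit R then t else 0)
  have hprod (s : Fin N → α) : (∏ j, q (s j)) * exp (t * hitCount hit s) = ∏ j, g (s j) := by
    rw [prod_mul_distrib, ← exp_sum, ← sum_filter, sum_const, nsmul_eq_mul, mul_comm t]
    rfl
  have hsum : ∑ R, g R = 1 + hitProb q hit * (exp t - 1) := by
    have hhit : ∑ R ∈ univ.filter hit, g R = hitProb q hit * exp t := by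
      rw [hitProb, sum_mul]
      exact sum_congr rfl fun R hR => by simp [g, (mem_filter.1 hR).2]
    have hmiss : ∑ R ∈ univ.filter (¬ hit ·), g R = ∑ R ∈ univ.filter (¬ hit ·), q R :=
      sum_congr rfl fun R hR => by simp [g, (mem_filter.1 hR).2]
    have hsplit := sum_filter_add_sum_filter_not univ hit q
    rw [← sum_filter_add_sum_filter_not univ hit, hhit, hmiss]
    rw [hq1, ← hitProb] at hsplit
    linarith
  simp only [hprod, ← hsum, Fintype.sum_pow]

lemma iidProb_le_exp (hq0 : ∀ R, 0 ≤ q R) (hq1 : ∑ R, q R = 1) (hit : α → Prop)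
    [DecidablePred hit] (t a : ℝ) :
    iidProb q N (fun s => t * a ≤ t * hitCount hit s)
      ≤ exp (N * hitProb q hit * (exp t - 1) - t * a) := by
  set p := hitProb q hit
  have hw (s : Fin N → α) : 0 ≤ ∏ j, q (s j) := prod_nonneg fun j _ => hq0 (s j)
  have hp0 : 0 ≤ p := sum_nonneg fun R _ => hq0 R
  have hbase : 0 ≤ 1 + p * (exp t - 1) := by
    nlinarith [mul_nonneg hp0 (exp_pos t).le, hitProb_le_one hq0 hq1 hit]
  -- Markov's inequality for `exp (t * hitCount)`
  calc iidProb q N (fun s => t * a ≤ t * hitCount hit s)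
      ≤ ∑ s : Fin N → α, (∏ j, q (s j)) * exp (t * hitCount hit s - t * a) := by
        refine (sum_le_sum fun s hs => ?_).trans
          (sum_le_sum_of_subset_of_nonneg (subset_univ _) fun s _ _ => ?_)
        · refine le_mul_of_one_le_right (hw s) (one_le_exp ?_)
          linarith [(mem_filter.1 hs).2]
        · exact mul_nonneg (hw s) (exp_pos _).le
    _ = exp (-(t * a)) * (1 + p * (exp t - 1)) ^ N := by
        rw [← sum_prod_mul_exp_hitCount N hq1, mul_sum]
        refine sum_congr rfl fun s _ => ?_
        rw [sub_eq_add_neg, exp_add]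
        ring
    _ ≤ exp (-(t * a)) * exp (p * (exp t - 1)) ^ N := by
        gcongr
        linarith [add_one_le_exp (p * (exp t - 1))]
    _ = exp (N * p * (exp t - 1) - t * a) := by
        rw [← exp_nat_mul, ← exp_add]
        ring_nf

lemma iidProb_hitCount_lt_le (hq0 : ∀ R, 0 ≤ q R) (hq1 : ∑ R, q R = 1) (hit : α → Prop)
    [DecidablePred hit] {x : ℝ} (hx0 : 0 ≤ x) (hx1 : x ≤ 1) :
    iidProb q N (fun s => (hitCount hit s : ℝ) < (1 - x) * (N * hitProb q hit))
      ≤ exp (-(x ^ 2 * (N * hitProb q hit) / 2)) := by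
  set μ := N * hitProb q hit
  have hμ : 0 ≤ μ := mul_nonneg N.cast_nonneg (sum_nonneg fun R _ => hq0 R)
  calc _ ≤ iidProb q N (fun s => -x * ((1 - x) * μ) ≤ -x * hitCount hit s) :=
        iidProb_mono N hq0 fun s hs => mul_le_mul_of_nonpos_left hs.le (by linarith)
    _ ≤ exp (μ * (exp (-x) - 1) - -x * ((1 - x) * μ)) := iidProb_le_exp N hq0 hq1 hit _ _
    _ ≤ exp (-(x ^ 2 * μ / 2)) := by
        gcongr
        linarith [mul_le_mul_of_nonneg_left (exp_neg_sub_one_add_le hx0 hx1) hμ]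

lemma iidProb_lt_hitCount_le (hq0 : ∀ R, 0 ≤ q R) (hq1 : ∑ R, q R = 1) (hit : α → Prop)
    [DecidablePred hit] {x μ : ℝ} (hx0 : 0 ≤ x) (hx1 : x ≤ 1)
    (hμ : N * hitProb q hit ≤ μ) :
    iidProb q N (fun s => N * hitProb q hit + x * μ < hitCount hit s)
      ≤ exp (-(x ^ 2 * μ / (2 + 2 * x / 3))) := by
  set ν := N * hitProb q hit
  -- the exponential moment is taken at `t = 3x/(3+x)`, which makes Bernstein's bound exact
  set t := 3 * x / (3 + x)
  have h3 : 0 < 3 + x := by linarith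
  have ht0 : 0 ≤ t := by positivity
  have ht1 : t ≤ 1 := by rw [div_le_one h3]; linarith
  have hbernstein : t ^ 2 / (2 - 2 * t / 3) - t * x = -(x ^ 2 / (2 + 2 * x / 3)) := by
    simp only [t]
    field_simp
    ring
  have hexp := exp_sub_one_sub_le ht0 ht1
  have hν : ν * (exp t - 1 - t) ≤ μ * (exp t - 1 - t) :=
    mul_le_mul_of_nonneg_right hμ (by linarith [add_one_le_exp t])
  have hμ0 : 0 ≤ μ := (mul_nonneg N.cast_nonneg (sum_nonneg fun R _ => hq0 R)).trans hμ
  calc _ ≤ iidProb q N (fun s => t * (ν + x * μ) ≤ t * hitCount hit s) :=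
        iidProb_mono N hq0 fun s hs => mul_le_mul_of_nonneg_left hs.le ht0
    _ ≤ exp (ν * (exp t - 1) - t * (ν + x * μ)) := iidProb_le_exp N hq0 hq1 hit _ _
    _ ≤ exp (-(x ^ 2 * μ / (2 + 2 * x / 3))) := by
        gcongr
        rw [mul_div_right_comm, ← neg_mul, ← hbernstein]
        linarith [mul_le_mul_of_nonneg_left hexp hμ0]

end SampleSequences

section Coverage

variable {E : Type*} [Fintype E] [DecidableEq E] {q : Finset E → ℝ} {N k : ℕ}

variable (q) in
abbrev coverProb (T : Finset E) : ℝ := hitProb q (fun R => (R ∩ T).Nonempty)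

abbrev coverage (T : Finset E) (s : Fin N → Finset E) : ℕ :=
  hitCount (fun R => (R ∩ T).Nonempty) s

-- Off the two tail events (`T₀` under-covered, some size-`k` set over-covered), the empirical
-- `β`-approximation `A s` loses at most `(1 + β) x μ` against the mean coverage `μ` of `T₀`.
lemma one_sub_tails_le_iidProb_approx (hq0 : ∀ R, 0 ≤ q R) (hq1 : ∑ R, q R = 1)
    {T₀ : Finset E} (hmax : ∀ T : Finset E, T.card = k → coverProb q T ≤ coverProb q T₀)
    {β x : ℝ} (hβ : 0 ≤ β) (hx0 : 0 ≤ x) (hx1 : x ≤ 1)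
    (A : (Fin N → Finset E) → Finset E) (hAcard : ∀ s, (A s).card = k)
    (hA : ∀ s, β * coverage T₀ s ≤ coverage (A s) s) :
    1 - (exp (-(x ^ 2 * (N * coverProb q T₀) / 2))
        + (Fintype.card E).choose k * exp (-(x ^ 2 * (N * coverProb q T₀) / (2 + 2 * x / 3))))
      ≤ iidProb q N (fun s => (β - (1 + β) * x) * coverProb q T₀ ≤ coverProb q (A s)) := by
  rcases N.eq_zero_or_pos with rfl | hN
  · simp only [CharP.cast_eq_zero, zero_mul, mul_zero, zero_div, neg_zero, exp_zero, mul_one]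
    linarith [iidProb_nonneg 0 hq0
        (fun s => (β - (1 + β) * x) * coverProb q T₀ ≤ coverProb q (A s)),
      (Nat.cast_nonneg _ : (0 : ℝ) ≤ (Fintype.card E).choose k)]
  set μ := N * coverProb q T₀
  have hlow := iidProb_hitCount_lt_le N hq0 hq1 (fun R => (R ∩ T₀).Nonempty) hx0 hx1
  have hup : iidProb q N (fun s => ∃ T ∈ powersetCard k univ,
        N * coverProb q T + x * μ < coverage T s)
      ≤ (Fintype.card E).choose k * exp (-(x ^ 2 * μ / (2 + 2 * x / 3))) := by
    refine (iidProb_exists_le N hq0 (powersetCard k univ)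
      (fun T s => N * coverProb q T + x * μ < coverage T s)).trans ?_
    rw [← card_univ (α := E), ← card_powersetCard, ← nsmul_eq_mul]
    refine sum_le_card_nsmul _ _ _ fun T hT => iidProb_lt_hitCount_le N hq0 hq1 _ hx0 hx1 ?_
    exact mul_le_mul_of_nonneg_left (hmax T (mem_powersetCard.1 hT).2) N.cast_nonneg
  refine le_trans ?_ (one_sub_iidProb_le N hq1 _)
  gcongr
  refine (iidProb_mono N hq0 fun s hs => ?_).trans ((iidProb_or_le N hq0 _ _).trans
    (add_le_add hlow hup))
  by_contra! hconc
  obtain ⟨hT₀, hnotover⟩ := hconc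
  have hAs := hnotover (A s) (mem_powersetCard.2 ⟨subset_univ _, hAcard s⟩)
  have hβT₀ := mul_le_mul_of_nonneg_left hT₀ hβ
  have hNs := mul_lt_mul_of_pos_left (not_le.1 hs) (Nat.cast_pos.2 hN : (0 : ℝ) < N)
  linarith [hA s]

end Coverage

lemma exp_tails_le_of_sample_size {x ε δ μ C : ℝ} (hx0 : 0 < x) (hxε : x ≤ ε)
    (hδ : 0 < δ) (hδ6 : δ ≤ 6) (hC : 1 ≤ C)
    (hμ : (2 + 2 / 3 * ε) * (log (6 / δ) + log C) ≤ x ^ 2 * μ) :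
    exp (-(x ^ 2 * μ / 2)) + C * exp (-(x ^ 2 * μ / (2 + 2 * x / 3))) ≤ δ / 3 := by
  set L := log (6 / δ) + log C
  have hL : exp (-L) = δ / 6 / C := by
    rw [exp_neg, exp_add, exp_log (by positivity), exp_log (by positivity)]
    field_simp
  have hL0 : 0 ≤ L :=
    add_nonneg (log_nonneg (by rw [le_div_iff₀ hδ]; linarith)) (log_nonneg hC)
  have hlow : exp (-(x ^ 2 * μ / 2)) ≤ δ / 6 / C := by
    rw [← hL]
    gcongr
    nlinarith
  have hup : exp (-(x ^ 2 * μ / (2 + 2 * x / 3))) ≤ δ / 6 / C := by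
    rw [← hL]
    gcongr
    rw [le_div_iff₀ (by positivity)]
    nlinarith
  calc exp (-(x ^ 2 * μ / 2)) + C * exp (-(x ^ 2 * μ / (2 + 2 * x / 3)))
      ≤ δ / 6 / C + C * (δ / 6 / C) := by gcongr
    _ ≤ δ / 3 := by
        rw [mul_div_cancel₀ _ (by positivity)]
        linarith [div_le_self (by positivity : 0 ≤ δ / 6) hC]

lemma le_sq_mul_of_sample_size {c ε I OPT L N : ℝ} (hc : 0 < c) (hε : 0 < ε) (hI : 0 < I)
    (hOPT : 0 < OPT) (hN : N ≥ c ^ 2 * (2 + 2 / 3 * ε) * I * (L / (OPT * ε ^ 2))) :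
    (2 + 2 / 3 * ε) * L ≤ (ε / c) ^ 2 * (N * (OPT / I)) :=
  calc (2 + 2 / 3 * ε) * L
      = (ε / c) ^ 2 * (OPT / I) * (c ^ 2 * (2 + 2 / 3 * ε) * I * (L / (OPT * ε ^ 2))) := by
        field_simp
    _ ≤ (ε / c) ^ 2 * (OPT / I) * N :=
        mul_le_mul_of_nonneg_left hN (mul_nonneg (sq_nonneg _) (div_pos hOPT hI).le)
    _ = (ε / c) ^ 2 * (N * (OPT / I)) := by ring

theorem stmt_10_general {E : Type*} [Fintype E] [DecidableEq E]
    (m : ℕ) (hm : Fintype.card E = m)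
    (q : Finset E → ℝ) (hq0 : ∀ R, 0 ≤ q R) (hq1 : ∑ R : Finset E, q R = 1)
    (I : ℝ) (hI : 0 < I)
    (D : Finset E → ℝ)
    (hD : ∀ T : Finset E,
      D T = I * ∑ R ∈ Finset.univ.filter (fun R : Finset E => (R ∩ T).Nonempty), q R)
    (k : ℕ) (hkm : k ≤ m)
    (ε δ : ℝ) (hε0 : 0 < ε) (hε1 : ε < 1) (hδ0 : 0 < δ) (hδ1 : δ < 1)
    (OPT : ℝ) (hOPTpos : 0 < OPT)
    (hOPTmem : ∃ T : Finset E, T.card = k ∧ D T = OPT)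
    (hOPTub : ∀ T : Finset E, T.card = k → D T ≤ OPT)
    (N : ℕ)
    (hN : (N : ℝ) ≥ (2 - 1/Real.exp 1)^2 * (2 + 2/3 * ε) * I *
      ((Real.log (6/δ) + Real.log (Nat.choose m k : ℝ)) / (OPT * ε^2)))
    (A : (Fin N → Finset E) → Finset E)
    (hAcard : ∀ s : Fin N → Finset E, (A s).card = k)
    (hAgreedy : ∀ s : Fin N → Finset E, ∀ T : Finset E, T.card = k →
      (1 - 1/Real.exp 1) *
          ((Finset.univ.filter (fun j : Fin N => ((s j) ∩ T).Nonempty)).card : ℝ)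
        ≤ ((Finset.univ.filter (fun j : Fin N => ((s j) ∩ A s).Nonempty)).card : ℝ)) :
    1 - δ/3 ≤
      ∑ s ∈ Finset.univ.filter
          (fun s : Fin N → Finset E => (1 - 1/Real.exp 1 - ε) * OPT ≤ D (A s)),
        ∏ j : Fin N, q (s j) := by
  obtain ⟨T₀, hT₀k, hT₀⟩ := hOPTmem
  have hDp (T : Finset E) : D T = I * coverProb q T := hD T
  have hps : coverProb q T₀ = OPT / I := by
    rw [eq_div_iff hI.ne', mul_comm, ← hT₀, hDp]
  have hmax (T : Finset E) (hT : T.card = k) : coverProb q T ≤ coverProb q T₀ :=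
    le_of_mul_le_mul_left (by rw [← hDp, ← hDp, hT₀]; exact hOPTub T hT) hI
  have hβ : 0 ≤ 1 - 1 / exp 1 :=
    sub_nonneg.2 ((div_le_one (exp_pos 1)).2 (one_le_exp zero_le_one))
  set c := 2 - 1 / exp 1
  have hc : 1 ≤ c := by linarith
  set x := ε / c
  have hx0 : 0 < x := div_pos hε0 (by linarith)
  have hxc : x * c = ε := div_mul_cancel₀ ε (by linarith)
  have hxε : x ≤ ε := div_le_self hε0.le hc
  have happrox := one_sub_tails_le_iidProb_approx hq0 hq1 hmax hβ hx0.le (hxε.trans hε1.le)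
    A hAcard fun s => hAgreedy s T₀ hT₀k
  rw [hm, hps] at happrox
  have hsample := le_sq_mul_of_sample_size (by linarith) hε0 hI hOPTpos hN
  have htails := exp_tails_le_of_sample_size hx0 hxε hδ0 (by linarith)
    (by exact_mod_cast Nat.choose_pos hkm) hsample
  refine le_trans (by linarith) (happrox.trans (iidProb_mono N hq0 fun s hs => ?_))
  rw [show (1 + (1 - 1 / exp 1)) * x = ε by rw [← hxc]; ring] at hs
  calc (1 - 1 / exp 1 - ε) * OPT = I * ((1 - 1 / exp 1 - ε) * (OPT / I)) := by field_simp
    _ ≤ D (A s) := by rw [hDp]; gcongr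

/-- Sample-complexity guarantee for greedy on samples (step S1 of Lemma A.2).
The ground set is a finite type `E` of cardinality `m`, `q` is a probability
distribution on subsets of `E`, `D T = I · Pr_{R∼q}[R ∩ T ≠ ∅]`, `OPT` is the
maximum of `D` over size-`k` sets, and a sequence `s : Fin N → Finset E` of
independent samples has probability `∏ j, q (s j)`.  `Cov` below denotes the
number of samples intersecting a given set.  If
`N ≥ (2−1/e)²(2+(2/3)ε)·I·(ln(6/δ)+ln C(m,k))/(OPT·ε²)` then any algorithm `A`
returning a size-`k` set whose coverage is within a `(1−1/e)` factor of the best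
size-`k` coverage outputs a `(1−1/e−ε)`-approximation with probability
at least `1 − δ/3`. -/
theorem stmt_10 {E : Type*} [Fintype E] [DecidableEq E]
    (m : ℕ) (hm : Fintype.card E = m)
    (q : Finset E → ℝ) (hq0 : ∀ R, 0 ≤ q R) (hq1 : ∑ R : Finset E, q R = 1)
    (I : ℝ) (hI : 0 < I)
    (D : Finset E → ℝ)
    (hD : ∀ T : Finset E,
      D T = I * ∑ R ∈ Finset.univ.filter (fun R : Finset E => (R ∩ T).Nonempty), q R)
    (k : ℕ) (hk1 : 1 ≤ k) (hkm : k ≤ m)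
    (ε δ : ℝ) (hε0 : 0 < ε) (hε1 : ε < 1) (hδ0 : 0 < δ) (hδ1 : δ < 1)
    (OPT : ℝ) (hOPTpos : 0 < OPT)
    (hOPTmem : ∃ T : Finset E, T.card = k ∧ D T = OPT)
    (hOPTub : ∀ T : Finset E, T.card = k → D T ≤ OPT)
    (N : ℕ)
    (hN : (N : ℝ) ≥ (2 - 1/Real.exp 1)^2 * (2 + 2/3 * ε) * I *
      ((Real.log (6/δ) + Real.log (Nat.choose m k : ℝ)) / (OPT * ε^2)))
    (A : (Fin N → Finset E) → Finset E)
    (hAcard : ∀ s : Fin N → Finset E, (A s).card = k)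
    (hAgreedy : ∀ s : Fin N → Finset E, ∀ T : Finset E, T.card = k →
      (1 - 1/Real.exp 1) *
          ((Finset.univ.filter (fun j : Fin N => ((s j) ∩ T).Nonempty)).card : ℝ)
        ≤ ((Finset.univ.filter (fun j : Fin N => ((s j) ∩ A s).Nonempty)).card : ℝ)) :
    1 - δ/3 ≤
      ∑ s ∈ Finset.univ.filter
          (fun s : Fin N → Finset E => (1 - 1/Real.exp 1 - ε) * OPT ≤ D (A s)),
        ∏ j : Fin N, q (s j) :=
  stmt_10_general m hm q hq0 hq1 I hI D hD k hkm ε δ hε0 hε1 hδ0 hδ1 OPT hOPTpos hOPTmem hOPTub N hN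
    A hAcard hAgreedy
end

section
/- Bad-event bound B⁽³⁾ (Lemma A.4): assume the sampling framework with ground set E of size m, distribution μ, constant I > 0, integer k ≥ 1, OPT_k > 0, ε ∈ (0,1), δ ∈ (0,1), and integers t, t_max with 1 ≤ t ≤ t_max. Let T* be a fixed size-k subset of E with D(T*) = OPT_k. Suppose the number of independent samples N_t satisfies N_t ≥ Λ · 2^{t−1}, where Λ = (2 + (2/3)ε) · ln(3 t_max / δ) / ε², and let ε*_t = ε · sqrt( I / ((1 + ε/3) · 2^{t−1} · OPT_k) ). Then Pr[ D_{N_t}(T*) ≤ (1 − ε*_t) · OPT_k ] ≤ δ / (3 t_max). -/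
/-!
`Cov(T*)` is a sum of `N_t` independent Bernoulli variables of mean `p = D(T*)/I = OPT_k/I`, and
the bad event is `Cov(T*) ≤ (1 - ε*_t) N_t p`. The multiplicative Chernoff lower tail bounds
its probability by `exp (-N_t p ε*_t² / 2)`, and `ε*_t` is chosen so that
`N_t p ε*_t² ≥ Λ ε² / (1 + ε/3) = 2 ln (3 t_max / δ)`.
-/

open Finset Real

theorem exp_neg_le_one_sub_add_sq_div_two {x : ℝ} (hx : 0 ≤ x) :
    exp (-x) ≤ 1 - x + x ^ 2 / 2 := by
  rw [exp_neg, inv_le_iff_one_le_mul₀ (exp_pos x)]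
  -- `(1 + x + x²/2)(1 - x + x²/2) = 1 + x⁴/4`
  calc (1 : ℝ) ≤ (1 - x + x ^ 2 / 2) * (1 + x + x ^ 2 / 2) := by nlinarith [sq_nonneg (x ^ 2)]
    _ ≤ (1 - x + x ^ 2 / 2) * exp x :=
        mul_le_mul_of_nonneg_left (quadratic_le_exp_of_nonneg hx) (by nlinarith [sq_nonneg (x - 1)])

section
variable {α : Type*} [Fintype α] (P : α → Prop) [DecidablePred P]

theorem sum_prod_mul_pow_card_filter {R : Type*} [CommSemiring R] (q : α → R) (N : ℕ) (c : R) :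
    ∑ s : Fin N → α, (∏ j, q (s j)) * c ^ #{j | P (s j)} =
      (∑ x, q x * if P x then c else 1) ^ N := by
  rw [Fintype.sum_pow]
  refine sum_congr rfl fun s _ => ?_
  rw [← prod_const, prod_filter, ← prod_mul_distrib]

theorem sum_mul_ite_eq_one_add {R : Type*} [CommRing R] {q : α → R} (hq1 : ∑ x, q x = 1)
    (c : R) : ∑ x, q x * (if P x then c else 1) = 1 + (c - 1) * ∑ x with P x, q x := by
  calc ∑ x, q x * (if P x then c else 1)
      = ∑ x, (q x + (c - 1) * if P x then q x else 0) :=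
        sum_congr rfl fun x _ => by split_ifs <;> ring
    _ = 1 + (c - 1) * ∑ x with P x, q x := by
        rw [sum_add_distrib, ← mul_sum, ← sum_filter, hq1]

variable {q : α → ℝ} (hq0 : ∀ x, 0 ≤ q x) (hq1 : ∑ x, q x = 1)
include hq0 hq1

theorem sum_prod_card_filter_le_le_exp (N : ℕ) {θ : ℝ} (hθ : 0 ≤ θ) (a : ℝ) :
    ∑ s : Fin N → α with (#{j | P (s j)} : ℝ) ≤ a, ∏ j, q (s j) ≤
      exp (θ * a + N * ((∑ x with P x, q x) * (exp (-θ) - 1))) := by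
  set p := ∑ x with P x, q x
  have hweight : ∀ s : Fin N → α, 0 ≤ ∏ j, q (s j) :=
    fun s => prod_nonneg fun j _ => hq0 (s j)
  -- Markov's inequality for `exp (θ * (a - #{j | P (s j)}))`
  calc ∑ s : Fin N → α with (#{j | P (s j)} : ℝ) ≤ a, ∏ j, q (s j)
      ≤ ∑ s : Fin N → α with (#{j | P (s j)} : ℝ) ≤ a,
          (∏ j, q (s j)) * exp (θ * (a - #{j | P (s j)})) :=
        sum_le_sum fun s hs => le_mul_of_one_le_right (hweight s)
          (one_le_exp (mul_nonneg hθ (sub_nonneg.2 (mem_filter.1 hs).2)))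
    _ ≤ ∑ s : Fin N → α, (∏ j, q (s j)) * exp (θ * (a - #{j | P (s j)})) :=
        sum_le_sum_of_subset_of_nonneg (filter_subset _ _)
          fun s _ _ => mul_nonneg (hweight s) (exp_nonneg _)
    _ = exp (θ * a) * ∑ s : Fin N → α, (∏ j, q (s j)) * exp (-θ) ^ #{j | P (s j)} := by
        rw [mul_sum]
        refine sum_congr rfl fun s _ => ?_
        rw [← exp_nat_mul, mul_left_comm, ← exp_add]
        ring_nf
    _ = exp (θ * a) * (1 + (exp (-θ) - 1) * p) ^ N := by
        rw [sum_prod_mul_pow_card_filter, sum_mul_ite_eq_one_add P hq1]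
    _ ≤ exp (θ * a) * exp (p * (exp (-θ) - 1)) ^ N := by
        gcongr
        · rw [← sum_mul_ite_eq_one_add P hq1]
          exact sum_nonneg fun x _ => mul_nonneg (hq0 x) (by split_ifs <;> positivity)
        · linarith [add_one_le_exp (p * (exp (-θ) - 1))]
    _ = exp (θ * a + N * (p * (exp (-θ) - 1))) := by rw [← exp_nat_mul, ← exp_add]

theorem chernoff_lower_tail (N : ℕ) {η : ℝ} (hη : 0 ≤ η) :
    ∑ s : Fin N → α with (#{j | P (s j)} : ℝ) ≤ (1 - η) * N * ∑ x with P x, q x,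
      ∏ j, q (s j) ≤ exp (-(N * (∑ x with P x, q x) * η ^ 2 / 2)) := by
  set p := ∑ x with P x, q x
  have hNp : 0 ≤ N * p := mul_nonneg N.cast_nonneg (sum_nonneg fun x _ => hq0 x)
  refine (sum_prod_card_filter_le_le_exp P hq0 hq1 N hη _).trans (exp_le_exp.2 ?_)
  nlinarith [mul_le_mul_of_nonneg_left (exp_neg_le_one_sub_add_sq_div_two hη) hNp]

end

theorem stmt_12_general {E : Type*} [Fintype E] [DecidableEq E]
    (q : Finset E → ℝ) (hq0 : ∀ R, 0 ≤ q R) (hq1 : ∑ R : Finset E, q R = 1)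
    (I : ℝ) (hI : 0 < I)
    (D : Finset E → ℝ)
    (hD : ∀ T : Finset E,
      D T = I * ∑ R ∈ Finset.univ.filter (fun R : Finset E => (R ∩ T).Nonempty), q R)
    (ε δ : ℝ) (hε0 : 0 < ε) (hδ0 : 0 < δ) (hδ1 : δ < 1)
    (t tmax : ℕ) (ht1 : 1 ≤ t) (httmax : t ≤ tmax)
    (OPT : ℝ) (hOPTpos : 0 < OPT)
    (Tstar : Finset E) (hTstar : D Tstar = OPT)
    (Λ : ℝ) (hΛ : Λ = (2 + 2/3 * ε) * Real.log (3 * (tmax : ℝ) / δ) * (1/ε^2))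
    (Nt : ℕ) (hNt : (Nt : ℝ) ≥ Λ * 2^(t - 1))
    (εstar : ℝ)
    (hεstar : εstar = ε * Real.sqrt (I / ((1 + ε/3) * 2^(t - 1) * OPT))) :
    (∑ s ∈ Finset.univ.filter (fun s : Fin Nt → Finset E =>
        I * ((Finset.univ.filter
            (fun j : Fin Nt => ((s j) ∩ Tstar).Nonempty)).card : ℝ) / (Nt : ℝ)
          ≤ (1 - εstar) * OPT),
      ∏ j : Fin Nt, q (s j)) ≤ δ / (3 * (tmax : ℝ)) := by
  set p := ∑ R : Finset E with (R ∩ Tstar).Nonempty, q R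
  have hIp : I * p = OPT := (hD Tstar).symm.trans hTstar
  have hp : 0 < p := pos_of_mul_pos_right (hIp ▸ hOPTpos) hI.le
  have hY : 1 < 3 * (tmax : ℝ) / δ := by
    rw [one_lt_div hδ0]
    linarith [show (1 : ℝ) ≤ tmax by exact_mod_cast ht1.trans httmax]
  have hN : 0 < (Nt : ℝ) := hNt.trans_lt' (by rw [hΛ]; have := log_pos hY; positivity)
  have hsize : 2 * log (3 * tmax / δ) ≤ Nt * p * εstar ^ 2 := by
    have hpε : p * εstar ^ 2 = ε ^ 2 / ((1 + ε / 3) * 2 ^ (t - 1)) := by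
      rw [hεstar, mul_pow, sq_sqrt (by positivity), ← hIp]
      field_simp
    calc 2 * log (3 * tmax / δ) = Λ * 2 ^ (t - 1) * (ε ^ 2 / ((1 + ε / 3) * 2 ^ (t - 1))) := by
          rw [hΛ]; field_simp
      _ ≤ Nt * p * εstar ^ 2 := by rw [mul_assoc _ p, hpε]; gcongr
  have hevent : ∀ s : Fin Nt → Finset E,
      I * (#{j | (s j ∩ Tstar).Nonempty} : ℝ) / Nt ≤ (1 - εstar) * OPT ↔
        (#{j | (s j ∩ Tstar).Nonempty} : ℝ) ≤ (1 - εstar) * Nt * p := by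
    intro s
    rw [div_le_iff₀ hN, ← hIp,
      show (1 - εstar) * (I * p) * Nt = I * ((1 - εstar) * Nt * p) by ring,
      mul_le_mul_iff_right₀ hI]
  rw [filter_congr fun s _ => hevent s]
  calc _ ≤ exp (-(Nt * p * εstar ^ 2 / 2)) :=
        chernoff_lower_tail _ hq0 hq1 Nt (by rw [hεstar]; positivity)
    _ ≤ exp (-log (3 * tmax / δ)) := by gcongr; linarith
    _ = δ / (3 * tmax) := by rw [exp_neg, exp_log (by linarith), inv_div]

/-- Bad-event bound `B⁽³⁾` (Lemma A.4): in the sampling framework, for a fixed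
optimal size-`k` set `T*` and `N_t ≥ Λ·2^{t−1}` independent samples, the
probability that the empirical suspension `D_{N_t}(T*) = I·Cov(T*)/N_t`
underestimates `OPT` by more than a `(1 − ε*_t)` factor is at most
`δ/(3·t_max)`, where `ε*_t = ε·√(I/((1+ε/3)·2^{t−1}·OPT))`. -/
theorem stmt_12 {E : Type*} [Fintype E] [DecidableEq E]
    (m : ℕ) (hm : Fintype.card E = m)
    (q : Finset E → ℝ) (hq0 : ∀ R, 0 ≤ q R) (hq1 : ∑ R : Finset E, q R = 1)
    (I : ℝ) (hI : 0 < I)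
    (D : Finset E → ℝ)
    (hD : ∀ T : Finset E,
      D T = I * ∑ R ∈ Finset.univ.filter (fun R : Finset E => (R ∩ T).Nonempty), q R)
    (k : ℕ) (hk1 : 1 ≤ k)
    (ε δ : ℝ) (hε0 : 0 < ε) (hε1 : ε < 1) (hδ0 : 0 < δ) (hδ1 : δ < 1)
    (t tmax : ℕ) (ht1 : 1 ≤ t) (httmax : t ≤ tmax)
    (OPT : ℝ) (hOPTpos : 0 < OPT)
    (hOPTub : ∀ T : Finset E, T.card = k → D T ≤ OPT)
    (Tstar : Finset E) (hTstarcard : Tstar.card = k) (hTstar : D Tstar = OPT)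
    (Λ : ℝ) (hΛ : Λ = (2 + 2/3 * ε) * Real.log (3 * (tmax : ℝ) / δ) * (1/ε^2))
    (Nt : ℕ) (hNt : (Nt : ℝ) ≥ Λ * 2^(t - 1))
    (εstar : ℝ)
    (hεstar : εstar = ε * Real.sqrt (I / ((1 + ε/3) * 2^(t - 1) * OPT))) :
    (∑ s ∈ Finset.univ.filter (fun s : Fin Nt → Finset E =>
        I * ((Finset.univ.filter
            (fun j : Fin Nt => ((s j) ∩ Tstar).Nonempty)).card : ℝ) / (Nt : ℝ)
          ≤ (1 - εstar) * OPT),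
      ∏ j : Fin Nt, q (s j)) ≤ δ / (3 * (tmax : ℝ)) :=
  stmt_12_general q hq0 hq1 I hI D hD ε δ hε0 hδ0 hδ1 t tmax ht1 httmax OPT hOPTpos Tstar hTstar Λ
    hΛ Nt hNt εstar hεstar
end
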